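/- arXiv:2110.04787 — 6 statements merged into one kernel-verified Lean document; each statement's English description precedes it below -/
import Mathlib

section
/- Let X, Y, Z be integrable real-valued random variables on a probability space that are mutually independent. Then E|Y−Z|·E|X| − E|X−Z|·E|Y| + E|X−Y|·E|Z| ≥ 0. -/
/-!
The identity `(x - z) y = (y - z) x + (x - y) z` and the triangle inequality give Ptolemy's
inequality `|x - z| |y| ≤ |y - z| |x| + |x - y| |z|` for reals (the four points `0, x, y, z` of
the line). Integrating it pointwise and splitting each expectation of a product into a product of
expectations, which independence allows, gives the claim.
-/

open MeasureTheory ProbabilityTheory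

lemma abs_sub_mul_abs_le (x y z : ℝ) : |x - z| * |y| ≤ |y - z| * |x| + |x - y| * |z| := by
  calc |x - z| * |y| = |(y - z) * x + (x - y) * z| := by rw [← abs_mul]; ring_nf
    _ ≤ |(y - z) * x| + |(x - y) * z| := abs_add_le _ _
    _ = |y - z| * |x| + |x - y| * |z| := by rw [abs_mul, abs_mul]

lemma integral_abs_sub_mul_abs_le {Ω : Type*} {mΩ : MeasurableSpace Ω} {μ : Measure Ω}
    {x y z : Ω → ℝ} (hyzx : Integrable (fun ω ↦ |y ω - z ω| * |x ω|) μ)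
    (hxyz : Integrable (fun ω ↦ |x ω - y ω| * |z ω|) μ) :
    ∫ ω, |x ω - z ω| * |y ω| ∂μ ≤
      (∫ ω, |y ω - z ω| * |x ω| ∂μ) + ∫ ω, |x ω - y ω| * |z ω| ∂μ := by
  rw [← integral_add hyzx hxyz]
  exact integral_mono_of_nonneg (.of_forall fun ω ↦ by positivity) (hyzx.add hxyz)
    (.of_forall fun ω ↦ abs_sub_mul_abs_le (x ω) (y ω) (z ω))

lemma ProbabilityTheory.iIndepFun.indepFun_abs_sub_abs {Ω ι : Type*} {mΩ : MeasurableSpace Ω} {μ : Measure Ω}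
    {f : ι → Ω → ℝ} (h : iIndepFun f μ) (hf : ∀ i, AEMeasurable (f i) μ) {i j k : ι}
    (hik : i ≠ k) (hjk : j ≠ k) :
    IndepFun (fun ω ↦ |f i ω - f j ω|) (fun ω ↦ |f k ω|) μ :=
  (h.indepFun_prodMk₀ hf i j k hik hjk).comp (measurable_fst.sub measurable_snd).abs
    measurable_id.abs

theorem expected_abs_diff_ptolemy_like_general
    {Ω : Type*} {mΩ : MeasurableSpace Ω} (P : Measure Ω)
    (X Y Z : Ω → ℝ)
    (hX : Integrable X P) (hY : Integrable Y P) (hZ : Integrable Z P)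
    (hindep : iIndepFun ![X, Y, Z] P) :
    0 ≤ (∫ ω, |Y ω - Z ω| ∂P) * (∫ ω, |X ω| ∂P)
        - (∫ ω, |X ω - Z ω| ∂P) * (∫ ω, |Y ω| ∂P)
        + (∫ ω, |X ω - Y ω| ∂P) * (∫ ω, |Z ω| ∂P) := by
  have hm : ∀ i, AEMeasurable (![X, Y, Z] i) P := by
    intro i
    fin_cases i
    exacts [hX.aemeasurable, hY.aemeasurable, hZ.aemeasurable]
  have hYZ_X : IndepFun (fun ω ↦ |Y ω - Z ω|) (fun ω ↦ |X ω|) P :=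
    hindep.indepFun_abs_sub_abs hm (i := 1) (j := 2) (k := 0) (by decide) (by decide)
  have hXZ_Y : IndepFun (fun ω ↦ |X ω - Z ω|) (fun ω ↦ |Y ω|) P :=
    hindep.indepFun_abs_sub_abs hm (i := 0) (j := 2) (k := 1) (by decide) (by decide)
  have hXY_Z : IndepFun (fun ω ↦ |X ω - Y ω|) (fun ω ↦ |Z ω|) P :=
    hindep.indepFun_abs_sub_abs hm (i := 0) (j := 1) (k := 2) (by decide) (by decide)
  have key := integral_abs_sub_mul_abs_le
    (hYZ_X.integrable_mul (hY.sub hZ).abs hX.abs) (hXY_Z.integrable_mul (hX.sub hY).abs hZ.abs)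
  rw [hYZ_X.integral_fun_mul_eq_mul_integral (hY.sub hZ).abs.1 hX.abs.1,
    hXZ_Y.integral_fun_mul_eq_mul_integral (hX.sub hZ).abs.1 hY.abs.1,
    hXY_Z.integral_fun_mul_eq_mul_integral (hX.sub hY).abs.1 hZ.abs.1] at key
  linarith

/-- For mutually independent integrable real random variables `X, Y, Z`,
`E|Y−Z|·E|X| − E|X−Z|·E|Y| + E|X−Y|·E|Z| ≥ 0`. -/
theorem expected_abs_diff_ptolemy_like
    {Ω : Type*} {mΩ : MeasurableSpace Ω} (P : Measure Ω) [IsProbabilityMeasure P]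
    (X Y Z : Ω → ℝ)
    (hX : Integrable X P) (hY : Integrable Y P) (hZ : Integrable Z P)
    (hindep : iIndepFun ![X, Y, Z] P) :
    0 ≤ (∫ ω, |Y ω - Z ω| ∂P) * (∫ ω, |X ω| ∂P)
        - (∫ ω, |X ω - Z ω| ∂P) * (∫ ω, |Y ω| ∂P)
        + (∫ ω, |X ω - Y ω| ∂P) * (∫ ω, |Z ω| ∂P) :=
  expected_abs_diff_ptolemy_like_general (mΩ := mΩ) P X Y Z hX hY hZ hindep
end

section
/- Let X and Y be independent integrable real-valued random variables whose laws are absolutely continuous with respect to Lebesgue measure, with means μ_X = E(X), μ_Y = E(Y), and cumulative distribution functions F (of X) and G (of Y). Then E|X−Y| = 2·( E[X·G(X)] + E[Y·F(Y)] ) − μ_X − μ_Y. -/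
/-!
Pointwise, `|x - y| = 2 (x 𝟙{y ≤ x} + y 𝟙{x < y}) - x - y`. Independence makes the law of
`(X, Y)` the product of the marginal laws, and integrating out one coordinate (Fubini) turns
`E[X 𝟙{Y ≤ X}]` into `E[X G(X)]` and `E[Y 𝟙{X < Y}]` into `E[Y P(X < y)|_{y = Y}] = E[Y F(Y)]`;
the last step holds because the law of `X`, being absolutely continuous, has no atoms.
-/

open MeasureTheory ProbabilityTheory Set

section

variable {μ ν : Measure ℝ} [IsProbabilityMeasure μ] [IsProbabilityMeasure ν]

lemma abs_sub_eq_two_mul_indicator_add_sub (p : ℝ × ℝ) :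
    |p.1 - p.2| =
      2 * ({q : ℝ × ℝ | q.2 ≤ q.1}.indicator Prod.fst p
        + {q : ℝ × ℝ | q.1 < q.2}.indicator Prod.snd p) - p.1 - p.2 := by
  rcases le_or_gt p.2 p.1 with h | h
  · simp [indicator, h, not_lt.mpr h, abs_of_nonneg (sub_nonneg.mpr h)]; ring
  · simp [indicator, h, not_le.mpr h, abs_of_neg (sub_neg.mpr h)]; ring

lemma integral_indicator_le_fst_prod (hμ : Integrable id μ) :
    ∫ p, {q : ℝ × ℝ | q.2 ≤ q.1}.indicator Prod.fst p ∂(μ.prod ν) = ∫ x, x * cdf ν x ∂μ := by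
  have hint : Integrable ({q : ℝ × ℝ | q.2 ≤ q.1}.indicator Prod.fst) (μ.prod ν) :=
    (hμ.comp_fst ν).indicator (measurableSet_le measurable_snd measurable_fst)
  rw [integral_prod _ hint]
  refine integral_congr_ae (.of_forall fun x => ?_)
  change ∫ y, (Iic x).indicator (fun _ => x) y ∂ν = x * cdf ν x
  rw [integral_indicator_const _ measurableSet_Iic, cdf_eq_real, smul_eq_mul, mul_comm]

lemma integral_indicator_lt_snd_prod [NullSingletonClass μ] (hν : Integrable id ν) :
    ∫ p, {q : ℝ × ℝ | q.1 < q.2}.indicator Prod.snd p ∂(μ.prod ν) = ∫ y, y * cdf μ y ∂ν := by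
  have hint : Integrable ({q : ℝ × ℝ | q.1 < q.2}.indicator Prod.snd) (μ.prod ν) :=
    (hν.comp_snd μ).indicator (measurableSet_lt measurable_fst measurable_snd)
  rw [integral_prod_symm _ hint]
  refine integral_congr_ae (.of_forall fun y => ?_)
  change ∫ x, (Iio y).indicator (fun _ => y) x ∂μ = y * cdf μ y
  rw [integral_indicator_const _ measurableSet_Iio, measureReal_congr Iio_ae_eq_Iic, cdf_eq_real,
    smul_eq_mul, mul_comm]

lemma integral_abs_sub_prod [NullSingletonClass μ] (hμ : Integrable id μ) (hν : Integrable id ν) :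
    ∫ p : ℝ × ℝ, |p.1 - p.2| ∂(μ.prod ν) =
      2 * (∫ x, x * cdf ν x ∂μ + ∫ y, y * cdf μ y ∂ν) - ∫ x, x ∂μ - ∫ y, y ∂ν := by
  have hfst : Integrable Prod.fst (μ.prod ν) := hμ.comp_fst ν
  have hsnd : Integrable Prod.snd (μ.prod ν) := hν.comp_snd μ
  have hle := hfst.indicator (measurableSet_le measurable_snd measurable_fst)
  have hlt := hsnd.indicator (measurableSet_lt measurable_fst measurable_snd)
  simp_rw [abs_sub_eq_two_mul_indicator_add_sub]
  rw [integral_sub, integral_sub, integral_const_mul, integral_add hle hlt,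
    integral_indicator_le_fst_prod hμ, integral_indicator_lt_snd_prod hν]
  · simp only [integral_fun_fst (fun x : ℝ => x), integral_fun_snd (fun y : ℝ => y), probReal_univ,
      one_smul]
  · exact (hle.add hlt).const_mul 2
  · exact hfst
  · exact ((hle.add hlt).const_mul 2).sub hfst
  · exact hsnd

end

theorem expected_abs_diff_eq_covariance_form_general
    {Ω : Type*} {mΩ : MeasurableSpace Ω} (P : Measure Ω) [IsProbabilityMeasure P]
    (X Y : Ω → ℝ)
    (hX : Integrable X P) (hY : Integrable Y P)
    (hindep : IndepFun X Y P)
    (hXac : P.map X ≪ volume)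
    (F G : ℝ → ℝ)
    (hF : ∀ x, F x = (P (X ⁻¹' Set.Iic x)).toReal)
    (hG : ∀ x, G x = (P (Y ⁻¹' Set.Iic x)).toReal) :
    ∫ ω, |X ω - Y ω| ∂P =
      2 * ((∫ ω, X ω * G (X ω) ∂P) + (∫ ω, Y ω * F (Y ω) ∂P))
        - (∫ ω, X ω ∂P) - (∫ ω, Y ω ∂P) := by
  have hXae := hX.aemeasurable
  have hYae := hY.aemeasurable
  have : IsProbabilityMeasure (P.map X) := Measure.isProbabilityMeasure_map hXae
  have : IsProbabilityMeasure (P.map Y) := Measure.isProbabilityMeasure_map hYae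
  have : NullSingletonClass (P.map X) := ⟨fun x => hXac Real.volume_singleton⟩
  have hF_cdf : F = cdf (P.map X) := funext fun x => by
    rw [hF, cdf_eq_real, map_measureReal_apply_of_aemeasurable hXae measurableSet_Iic,
      measureReal_def]
  have hG_cdf : G = cdf (P.map Y) := funext fun x => by
    rw [hG, cdf_eq_real, map_measureReal_apply_of_aemeasurable hYae measurableSet_Iic,
      measureReal_def]
  have hmul_cdf (ν : Measure ℝ) : Measurable fun x => x * cdf ν x :=
    measurable_id.mul (cdf ν).mono.measurable
  subst hF_cdf hG_cdf
  rw [← integral_map (f := fun p : ℝ × ℝ => |p.1 - p.2|) (hXae.prodMk hYae)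
      (measurable_fst.sub measurable_snd).abs.aestronglyMeasurable,
    hindep.map_prod_eq_prod_map_map hXae hYae,
    integral_abs_sub_prod ((integrable_map_measure aestronglyMeasurable_id hXae).mpr hX)
      ((integrable_map_measure aestronglyMeasurable_id hYae).mpr hY),
    integral_map hXae (hmul_cdf _).aestronglyMeasurable,
    integral_map hYae (hmul_cdf _).aestronglyMeasurable,
    integral_map (f := fun x => x) hXae aestronglyMeasurable_id,
    integral_map (f := fun y => y) hYae aestronglyMeasurable_id]

/-- for independent integrable absolutely continuous real random variables
`X, Y`, with cdf's `F, G` and means `μ_X, μ_Y`,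
`E|X−Y| = 2·(E[X·G(X)] + E[Y·F(Y)]) − μ_X − μ_Y`. -/
theorem expected_abs_diff_eq_covariance_form
    {Ω : Type*} {mΩ : MeasurableSpace Ω} (P : Measure Ω) [IsProbabilityMeasure P]
    (X Y : Ω → ℝ) (hXm : Measurable X) (hYm : Measurable Y)
    (hX : Integrable X P) (hY : Integrable Y P)
    (hindep : IndepFun X Y P)
    (hXac : P.map X ≪ volume) (hYac : P.map Y ≪ volume)
    (F G : ℝ → ℝ)
    (hF : ∀ x, F x = (P (X ⁻¹' Set.Iic x)).toReal)
    (hG : ∀ x, G x = (P (Y ⁻¹' Set.Iic x)).toReal) :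
    ∫ ω, |X ω - Y ω| ∂P =
      2 * ((∫ ω, X ω * G (X ω) ∂P) + (∫ ω, Y ω * F (Y ω) ∂P))
        - (∫ ω, X ω ∂P) - (∫ ω, Y ω ∂P) :=
  expected_abs_diff_eq_covariance_form_general (mΩ := mΩ) P X Y hX hY hindep hXac F G hF hG
end

section
/- Let X and Y be independent identically distributed integrable real-valued random variables whose common law is absolutely continuous with respect to Lebesgue measure, and let F be their common cumulative distribution function. Then E|X−Y| = 4·E[X·F(X)] − 2·E(X). -/
/-!
Write `|x - y| = 2 max x y - (x + y)`. Since the law has no atoms, ties `X = Y` are null, so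
`max X Y` is `X` on `{Y ≤ X}` and `Y` on the complement up to a null set; exchanging `X` and `Y`
gives `E[max X Y] = 2 E[X 1{Y ≤ X}]`, and integrating out `Y` first turns the latter into
`E[X F(X)]`.
-/

open MeasureTheory ProbabilityTheory

lemma abs_sub_eq_two_mul_max_sub_add {α : Type*} [CommRing α] [LinearOrder α] [IsOrderedRing α]
    (a b : α) : |a - b| = 2 * max a b - (a + b) := by
  rw [← max_sub_min_eq_abs', ← min_add_max]; ring

lemma MeasureTheory.Measure.ae_fst_ne_snd_prod {α : Type*} [MeasurableSpace α] [MeasurableEq α]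
    {μ ν : Measure α} [SFinite ν] [NullSingletonClass ν] :
    ∀ᵐ p ∂(μ.prod ν), p.1 ≠ p.2 :=
  (Measure.ae_prod_iff_ae_ae (measurableSet_eq_fun measurable_fst measurable_snd).compl).2
    (ae_of_all _ fun x => (ν.ae_ne x).mono fun _ hy => hy.symm)

namespace ProbabilityTheory

variable {μ ν : Measure ℝ}

lemma integral_indicator_snd_le_fst_prod [SFinite μ] [IsProbabilityMeasure ν]
    (hμ : Integrable id μ) :
    ∫ p, {p : ℝ × ℝ | p.2 ≤ p.1}.indicator Prod.fst p ∂(μ.prod ν) = ∫ x, x * cdf ν x ∂μ := by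
  have hmeas : MeasurableSet {p : ℝ × ℝ | p.2 ≤ p.1} :=
    measurableSet_le measurable_snd measurable_fst
  have hfst : Integrable (Prod.fst : ℝ × ℝ → ℝ) (μ.prod ν) := hμ.comp_fst ν
  rw [integral_prod _ (hfst.indicator hmeas)]
  refine integral_congr_ae (ae_of_all _ fun x => ?_)
  have hsection : (fun y => {p : ℝ × ℝ | p.2 ≤ p.1}.indicator Prod.fst (x, y))
      = (Set.Iic x).indicator fun _ => x := by
    ext y; simp [Set.indicator]
  simp only [hsection, integral_indicator_const _ measurableSet_Iic, smul_eq_mul, cdf_eq_real,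
    mul_comm]

lemma integral_max_prod_self [IsProbabilityMeasure μ] [NullSingletonClass μ]
    (hμ : Integrable id μ) :
    ∫ p, max p.1 p.2 ∂(μ.prod μ) = 2 * ∫ x, x * cdf μ x ∂μ := by
  set A := {p : ℝ × ℝ | p.2 ≤ p.1}
  have hA : MeasurableSet A := measurableSet_le measurable_snd measurable_fst
  have hmax : (fun p : ℝ × ℝ => max p.1 p.2) =ᵐ[μ.prod μ]
      fun p => A.indicator Prod.fst p + A.indicator Prod.fst p.swap := by
    filter_upwards [Measure.ae_fst_ne_snd_prod] with p hp
    rcases hp.lt_or_gt with h | h <;> simp [A, Set.indicator, h.le, h.not_ge]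
  have hfst : Integrable (Prod.fst : ℝ × ℝ → ℝ) (μ.prod μ) := hμ.comp_fst μ
  have hint : Integrable (A.indicator Prod.fst) (μ.prod μ) := hfst.indicator hA
  have hint_swap : Integrable (fun p : ℝ × ℝ => A.indicator Prod.fst p.swap) (μ.prod μ) :=
    hint.swap
  rw [integral_congr_ae hmax, integral_add hint hint_swap,
    integral_prod_swap (A.indicator Prod.fst), integral_indicator_snd_le_fst_prod hμ, two_mul]

lemma integral_abs_sub_prod_self [IsProbabilityMeasure μ] [NullSingletonClass μ]
    (hμ : Integrable id μ) :
    ∫ p, |p.1 - p.2| ∂(μ.prod μ) = 4 * ∫ x, x * cdf μ x ∂μ - 2 * ∫ x, x ∂μ := by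
  have hfst : Integrable (fun p : ℝ × ℝ => p.1) (μ.prod μ) := hμ.comp_fst μ
  have hsnd : Integrable (fun p : ℝ × ℝ => p.2) (μ.prod μ) := hμ.comp_snd μ
  have hmax : Integrable (fun p : ℝ × ℝ => 2 * max p.1 p.2) (μ.prod μ) :=
    (hfst.sup hsnd).const_mul 2
  have hsum : Integrable (fun p : ℝ × ℝ => p.1 + p.2) (μ.prod μ) := hfst.add hsnd
  simp only [abs_sub_eq_two_mul_max_sub_add]
  rw [integral_sub hmax hsum, integral_const_mul,
    integral_add hfst hsnd, integral_max_prod_self hμ]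
  simp only [integral_fun_fst (fun x : ℝ => x), integral_fun_snd (fun x : ℝ => x), probReal_univ,
    one_smul]
  ring

end ProbabilityTheory

theorem expected_abs_diff_iid_eq_four_cov_general
    {Ω : Type*} {mΩ : MeasurableSpace Ω} (P : Measure Ω) [IsProbabilityMeasure P]
    (X Y : Ω → ℝ) (hXm : Measurable X) (hYm : Measurable Y)
    (hX : Integrable X P)
    (hindep : IndepFun X Y P)
    (hid : P.map X = P.map Y)
    (hac : P.map X ≪ volume)
    (F : ℝ → ℝ)
    (hF : ∀ x, F x = (P (X ⁻¹' Set.Iic x)).toReal) :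
    ∫ ω, |X ω - Y ω| ∂P = 4 * (∫ ω, X ω * F (X ω) ∂P) - 2 * (∫ ω, X ω ∂P) := by
  set μ := P.map X
  have : IsProbabilityMeasure μ := Measure.isProbabilityMeasure_map hXm.aemeasurable
  have : NullSingletonClass μ := ⟨fun x => hac (measure_singleton x)⟩
  have hjoint : P.map (fun ω => (X ω, Y ω)) = μ.prod μ := by
    rw [(indepFun_iff_map_prod_eq_prod_map_map hXm.aemeasurable hYm.aemeasurable).mp hindep, ← hid]
  have hF_cdf : F = cdf μ := funext fun x => by
    rw [hF, cdf_eq_real, measureReal_def, Measure.map_apply hXm measurableSet_Iic]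
  have hμ : Integrable id μ :=
    (integrable_map_measure aestronglyMeasurable_id hXm.aemeasurable).2 hX
  calc ∫ ω, |X ω - Y ω| ∂P = ∫ p, |p.1 - p.2| ∂(P.map fun ω => (X ω, Y ω)) :=
        (integral_map (hXm.prodMk hYm).aemeasurable (f := fun p : ℝ × ℝ => |p.1 - p.2|)
          (by fun_prop)).symm
    _ = 4 * ∫ x, x * cdf μ x ∂μ - 2 * ∫ x, x ∂μ := by rw [hjoint, integral_abs_sub_prod_self hμ]
    _ = _ := by
      have hcdf : Measurable (cdf μ) := (cdf μ).mono.measurable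
      rw [hF_cdf, integral_map hXm.aemeasurable (by fun_prop),
        integral_map hXm.aemeasurable (by fun_prop)]

/-- for i.i.d. integrable absolutely continuous real random variables
`X, Y` with common cdf `F`, `E|X−Y| = 4·E[X·F(X)] − 2·E(X)`. -/
theorem expected_abs_diff_iid_eq_four_cov
    {Ω : Type*} {mΩ : MeasurableSpace Ω} (P : Measure Ω) [IsProbabilityMeasure P]
    (X Y : Ω → ℝ) (hXm : Measurable X) (hYm : Measurable Y)
    (hX : Integrable X P) (hY : Integrable Y P)
    (hindep : IndepFun X Y P)
    (hid : P.map X = P.map Y)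
    (hac : P.map X ≪ volume)
    (F : ℝ → ℝ)
    (hF : ∀ x, F x = (P (X ⁻¹' Set.Iic x)).toReal) :
    ∫ ω, |X ω - Y ω| ∂P = 4 * (∫ ω, X ω * F (X ω) ∂P) - 2 * (∫ ω, X ω ∂P) :=
  expected_abs_diff_iid_eq_four_cov_general (mΩ := mΩ) P X Y hXm hYm hX hindep hid hac F hF
end

section
/- Let a₁ ≤ b₁ < a₂ < b₂ be real numbers (the intervals A = (a₁,a₂) and B = (b₁,b₂) overlap without inclusion), and let X ~ U(a₁,a₂) and Y ~ U(b₁,b₂) be independent. Then E|X−Y| = [ (b₂−b₁)(b₁−a₁)(b₂−a₁)/2 + (b₂−a₂)(a₂−b₁)(b₂−b₁)/2 + (a₂−b₁)³/3 ] / ( (a₂−a₁)(b₂−b₁) ). -/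
/-!
Independence and uniformity turn `E|X − Y|` into the normalised integral of `|x − y|` over the
rectangle `(a₁,a₂) × (b₁,b₂)`. Since `|u|³/6` has second derivative `|u|`, that double integral is
the second difference `(|b₂−a₁|³ − |b₂−a₂|³ − |b₁−a₁|³ + |b₁−a₂|³)/6` of `|u|³/6` at the corners,
and the ordering `a₁ ≤ b₁ < a₂ < b₂` fixes the sign of each corner.
-/

open MeasureTheory ProbabilityTheory Set Asymptotics

theorem hasDerivAt_mul_abs (x : ℝ) : HasDerivAt (fun u : ℝ => u * |u|) (2 * |x|) x := by
  rcases lt_trichotomy x 0 with hx | rfl | hx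
  · exact ((hasDerivAt_id' x).mul (hasDerivAt_abs_neg hx)).congr_deriv
      (by rw [abs_of_neg hx]; ring)
  · rw [hasDerivAt_iff_isLittleO_nhds_zero]
    simpa using (isBigO_refl (fun h : ℝ => h) _).mul_isLittleO
      ((isLittleO_one_iff ℝ).2 (continuous_abs.tendsto' 0 0 abs_zero))
  · exact ((hasDerivAt_id' x).mul (hasDerivAt_abs_pos hx)).congr_deriv
      (by rw [abs_of_pos hx]; ring)

theorem hasDerivAt_abs_pow_three (x : ℝ) :
    HasDerivAt (fun u : ℝ => |u| ^ 3) (3 * (x * |x|)) x := by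
  have h : HasDerivAt (fun u : ℝ => u * (u * |u|)) (3 * (x * |x|)) x :=
    ((hasDerivAt_id' x).mul (hasDerivAt_mul_abs x)).congr_deriv (by ring)
  refine h.congr_of_eventuallyEq (Filter.Eventually.of_forall fun u => ?_)
  show |u| ^ 3 = u * (u * |u|)
  rw [← mul_assoc, ← pow_two, ← sq_abs]; ring

theorem integral_abs_const_sub (x a b : ℝ) :
    ∫ y in a..b, |x - y| = ((b - x) * |b - x| - (a - x) * |a - x|) / 2 := by
  have h : ∀ y, HasDerivAt (fun y => (y - x) * |y - x| / 2) |x - y| y := fun y => by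
    have := ((hasDerivAt_mul_abs (y - x)).comp y ((hasDerivAt_id' y).sub_const x)).div_const 2
    exact this.congr_deriv (by rw [abs_sub_comm]; ring)
  rw [intervalIntegral.integral_eq_sub_of_hasDerivAt (fun y _ => h y)
    (Continuous.intervalIntegrable (by fun_prop) _ _)]
  ring

theorem integral_const_sub_mul_abs_const_sub (c a b : ℝ) :
    ∫ x in a..b, (c - x) * |c - x| = (|c - a| ^ 3 - |c - b| ^ 3) / 3 := by
  have h : ∀ x, HasDerivAt (fun x => -|c - x| ^ 3 / 3) ((c - x) * |c - x|) x := fun x => by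
    have := (((hasDerivAt_abs_pow_three (c - x)).comp x
      ((hasDerivAt_id' x).const_sub c)).neg).div_const 3
    exact this.congr_deriv (by ring)
  rw [intervalIntegral.integral_eq_sub_of_hasDerivAt (fun x _ => h x)
    (Continuous.intervalIntegrable (by fun_prop) _ _)]
  ring

theorem integral_integral_abs_sub (a₁ a₂ b₁ b₂ : ℝ) :
    ∫ x in a₁..a₂, ∫ y in b₁..b₂, |x - y| =
      (|b₂ - a₁| ^ 3 - |b₂ - a₂| ^ 3 - |b₁ - a₁| ^ 3 + |b₁ - a₂| ^ 3) / 6 := by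
  simp_rw [integral_abs_const_sub]
  rw [intervalIntegral.integral_div, intervalIntegral.integral_sub
    (Continuous.intervalIntegrable (by fun_prop) _ _)
    (Continuous.intervalIntegrable (by fun_prop) _ _),
    integral_const_sub_mul_abs_const_sub, integral_const_sub_mul_abs_const_sub]
  ring

namespace ProbabilityTheory

variable {Ω α β : Type*} {mΩ : MeasurableSpace Ω} [MeasurableSpace α] [MeasurableSpace β]
  {P : Measure Ω} {μ : Measure α} {ν : Measure β} {s : Set α} {t : Set β}

theorem cond_prod_cond [SFinite μ] [SFinite ν] :
    (μ[|s]).prod (ν[|t]) = ((μ s)⁻¹ * (ν t)⁻¹) • (μ.prod ν).restrict (s ×ˢ t) := by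
  rw [ProbabilityTheory.cond, ProbabilityTheory.cond, Measure.prod_smul_left,
    Measure.prod_smul_right, Measure.prod_restrict, smul_smul]

theorem IndepFun.map_prodMk_eq_cond_prod {X : Ω → α} {Y : Ω → β}
    (hs₀ : μ s ≠ 0) (hs : μ s ≠ ⊤) (ht₀ : ν t ≠ 0) (ht : ν t ≠ ⊤)
    (hX : pdf.IsUniform X s P μ) (hY : pdf.IsUniform Y t P ν) (hXY : IndepFun X Y P) :
    P.map (fun ω => (X ω, Y ω)) = (μ[|s]).prod (ν[|t]) := by
  have := hX.isProbabilityMeasure hs₀ hs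
  rw [← hX, ← hY]
  exact (indepFun_iff_map_prod_eq_prod_map_map (hX.aemeasurable hs₀ hs)
    (hY.aemeasurable ht₀ ht)).1 hXY

theorem IndepFun.integral_comp_prodMk_of_isUniform {E : Type*} [NormedAddCommGroup E]
    [NormedSpace ℝ E] [SFinite μ] [SFinite ν] {X : Ω → α} {Y : Ω → β} {f : α × β → E}
    (hs₀ : μ s ≠ 0) (hs : μ s ≠ ⊤) (ht₀ : ν t ≠ 0) (ht : ν t ≠ ⊤)
    (hX : pdf.IsUniform X s P μ) (hY : pdf.IsUniform Y t P ν) (hXY : IndepFun X Y P)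
    (hf : IntegrableOn f (s ×ˢ t) (μ.prod ν)) :
    ∫ ω, f (X ω, Y ω) ∂P =
      ((μ s).toReal * (ν t).toReal)⁻¹ • ∫ x in s, ∫ y in t, f (x, y) ∂ν ∂μ := by
  have hlaw := hXY.map_prodMk_eq_cond_prod hs₀ hs ht₀ ht hX hY
  rw [cond_prod_cond] at hlaw
  have hfP : Integrable f (P.map fun ω => (X ω, Y ω)) := by
    rw [hlaw]
    exact hf.smul_measure
      (ENNReal.mul_ne_top (ENNReal.inv_ne_top.2 hs₀) (ENNReal.inv_ne_top.2 ht₀))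
  rw [← integral_map ((hX.aemeasurable hs₀ hs).prodMk (hY.aemeasurable ht₀ ht))
    hfP.aestronglyMeasurable, hlaw, integral_smul_measure, setIntegral_prod _ hf,
    ENNReal.toReal_mul, ENNReal.toReal_inv, ENNReal.toReal_inv, mul_inv]

end ProbabilityTheory

theorem expected_abs_diff_uniform_overlap_general
    {Ω : Type*} {mΩ : MeasurableSpace Ω} (P : Measure Ω)
    (X Y : Ω → ℝ)
    (a₁ a₂ b₁ b₂ : ℝ) (h₁ : a₁ ≤ b₁) (h₂ : b₁ < a₂) (h₃ : a₂ < b₂)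
    (hX : pdf.IsUniform X (Set.Ioo a₁ a₂) P volume)
    (hY : pdf.IsUniform Y (Set.Ioo b₁ b₂) P volume)
    (hindep : IndepFun X Y P) :
    ∫ ω, |X ω - Y ω| ∂P =
      ((b₂ - b₁) * (b₁ - a₁) * (b₂ - a₁) / 2
        + (b₂ - a₂) * (a₂ - b₁) * (b₂ - b₁) / 2
        + (a₂ - b₁) ^ 3 / 3) / ((a₂ - a₁) * (b₂ - b₁)) := by
  have ha : a₁ < a₂ := h₁.trans_lt h₂
  have hb : b₁ < b₂ := h₂.trans h₃
  have hint : IntegrableOn (fun z : ℝ × ℝ => |z.1 - z.2|) (Ioo a₁ a₂ ×ˢ Ioo b₁ b₂)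
      (volume.prod volume) := by
    rw [← Measure.volume_eq_prod]
    exact (ContinuousOn.integrableOn_compact (isCompact_Icc.prod isCompact_Icc)
      (by fun_prop)).mono_set (prod_mono Ioo_subset_Icc_self Ioo_subset_Icc_self)
  rw [hindep.integral_comp_prodMk_of_isUniform (f := fun z => |z.1 - z.2|) (by simp [ha])
    (by simp) (by simp [hb]) (by simp) hX hY hint]
  simp_rw [← integral_Ioc_eq_integral_Ioo, ← intervalIntegral.integral_of_le ha.le,
    ← intervalIntegral.integral_of_le hb.le]
  rw [integral_integral_abs_sub, Real.volume_Ioo, Real.volume_Ioo,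
    ENNReal.toReal_ofReal (sub_pos.2 ha).le, ENNReal.toReal_ofReal (sub_pos.2 hb).le,
    abs_of_pos (by linarith : 0 < b₂ - a₁), abs_of_pos (sub_pos.2 h₃),
    abs_of_nonneg (sub_nonneg.2 h₁), abs_of_neg (sub_neg.2 h₂), smul_eq_mul]
  field_simp
  ring

/-- overlap without inclusion: for `a₁ ≤ b₁ < a₂ < b₂` and independent
`X ~ U(a₁,a₂)`, `Y ~ U(b₁,b₂)`,
`E|X−Y| = [(b₂−b₁)(b₁−a₁)(b₂−a₁)/2 + (b₂−a₂)(a₂−b₁)(b₂−b₁)/2 + (a₂−b₁)³/3] /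
((a₂−a₁)(b₂−b₁))`. -/
theorem expected_abs_diff_uniform_overlap
    {Ω : Type*} {mΩ : MeasurableSpace Ω} (P : Measure Ω) [IsProbabilityMeasure P]
    (X Y : Ω → ℝ)
    (a₁ a₂ b₁ b₂ : ℝ) (h₁ : a₁ ≤ b₁) (h₂ : b₁ < a₂) (h₃ : a₂ < b₂)
    (hX : pdf.IsUniform X (Set.Ioo a₁ a₂) P volume)
    (hY : pdf.IsUniform Y (Set.Ioo b₁ b₂) P volume)
    (hindep : IndepFun X Y P) :
    ∫ ω, |X ω - Y ω| ∂P =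
      ((b₂ - b₁) * (b₁ - a₁) * (b₂ - a₁) / 2
        + (b₂ - a₂) * (a₂ - b₁) * (b₂ - b₁) / 2
        + (a₂ - b₁) ^ 3 / 3) / ((a₂ - a₁) * (b₂ - b₁)) :=
  expected_abs_diff_uniform_overlap_general (mΩ := mΩ) P X Y a₁ a₂ b₁ b₂ h₁ h₂ h₃ hX hY hindep
end

section
/- Let x₁ ≤ x₂ ≤ ⋯ ≤ xₙ and y₁ ≤ y₂ ≤ ⋯ ≤ yₙ be two ordered finite sequences of real numbers and let h : ℝ → ℝ be convex and continuous. Then for every permutation σ of {1, …, n}, Σ_{i=1}^n h(x_i − y_i) ≤ Σ_{i=1}^n h(x_i − y_{σ(i)}); in particular, for every permutation σ, Σ_{i=1}^n |x_i − y_i| ≤ Σ_{i=1}^n |x_i − y_{σ(i)}|, i.e. the identity permutation minimizes Σ_i |x_i − y_{σ(i)}| over all permutations σ. -/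
/-! For convex `φ` the cost `(u, v) ↦ φ (u - v)` is submodular:
`φ (a - c) + φ (b - d) ≤ φ (a - d) + φ (b - c)` whenever `a ≤ b` and `c ≤ d`.
So if `a` is an index at which both `f` and `g` are largest, exchanging the `σ`-images of `a` and
`σ⁻¹ a` fixes `a` without increasing `∑ i, φ (f i - g (σ i))`, and induction on the support of `σ`
brings `σ` down to the identity. Taking `φ = |·|` gives the second claim. -/

open Finset Equiv Equiv.Perm

variable {ι 𝕜 β : Type*} [Field 𝕜] [LinearOrder 𝕜] [IsStrictOrderedRing 𝕜]
  [AddCommGroup β] [PartialOrder β] [IsOrderedAddMonoid β] [Module 𝕜 β]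

theorem ConvexOn.map_add_map_le_of_add_eq {s : Set 𝕜} {φ : 𝕜 → β} (hφ : ConvexOn 𝕜 s φ)
    {a b x y : 𝕜} (ha : a ∈ s) (hb : b ∈ s) (hax : a ≤ x) (hxb : x ≤ b)
    (hxy : x + y = a + b) : φ x + φ y ≤ φ a + φ b := by
  obtain rfl | hax := hax.eq_or_lt
  · rw [add_left_cancel hxy]
  have hab : 0 < b - a := by linarith
  set l := (b - x) / (b - a)
  have hx : l • a + (1 - l) • b = x := by simp only [smul_eq_mul, l]; field_simp; ring
  have hy : (1 - l) • a + l • b = y := by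
    simp only [smul_eq_mul, l]; field_simp; linear_combination (a - b) * hxy
  have hl : 0 ≤ l := div_nonneg (by linarith) hab.le
  have hl' : 0 ≤ 1 - l := by rw [sub_nonneg, div_le_one hab]; linarith
  calc φ x + φ y
      ≤ (l • φ a + (1 - l) • φ b) + ((1 - l) • φ a + l • φ b) := by
        rw [← hx, ← hy]
        exact add_le_add (hφ.2 ha hb hl hl' (by ring)) (hφ.2 ha hb hl' hl (by ring))
    _ = φ a + φ b := by module

theorem ConvexOn.map_sub_add_map_sub_le {φ : 𝕜 → β} (hφ : ConvexOn 𝕜 Set.univ φ)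
    {a b c d : 𝕜} (hab : a ≤ b) (hcd : c ≤ d) :
    φ (a - c) + φ (b - d) ≤ φ (a - d) + φ (b - c) :=
  hφ.map_add_map_le_of_add_eq trivial trivial (by linarith) (by linarith) (by ring)

theorem Finset.sum_comp_mul_swap_add {M : Type*} [DecidableEq ι] [AddCommMonoid M]
    (c : ι → ι → M) (σ : Perm ι) {t : Finset ι} {k a : ι} (hk : k ∈ t) (ha : a ∈ t)
    (hka : k ≠ a) :
    ∑ i ∈ t, c i ((σ * swap k a) i) + (c k (σ k) + c a (σ a)) =
      ∑ i ∈ t, c i (σ i) + (c k (σ a) + c a (σ k)) := by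
  have ha' : a ∈ t.erase k := mem_erase.2 ⟨hka.symm, ha⟩
  have hrest : ∑ i ∈ (t.erase k).erase a, c i (σ (swap k a i)) =
      ∑ i ∈ (t.erase k).erase a, c i (σ i) := by
    refine sum_congr rfl fun i hi => ?_
    obtain ⟨hia, hik, -⟩ := by simpa only [mem_erase] using hi
    rw [swap_apply_of_ne_of_ne hik hia]
  rw [← add_sum_erase t _ hk, ← add_sum_erase _ _ ha', ← add_sum_erase t _ hk,
    ← add_sum_erase _ _ ha']
  simp only [mul_apply, swap_apply_left, swap_apply_right, hrest]
  abel

theorem MonovaryOn.sum_map_sub_le_sum_map_sub_comp_perm {φ : 𝕜 → β}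
    (hφ : ConvexOn 𝕜 Set.univ φ) {f g : ι → 𝕜} {s : Finset ι} (hfg : MonovaryOn f g s)
    {σ : Perm ι} (hσ : {x | σ x ≠ x} ⊆ s) :
    ∑ i ∈ s, φ (f i - g i) ≤ ∑ i ∈ s, φ (f i - g (σ i)) := by
  classical
  induction s using induction_on_max_value fun i ↦ toLex (g i, f i) generalizing σ with
  | empty => rfl
  | insert a s has hamax ih => ?_
  have hmax : ∀ i ∈ insert a s, g i ≤ g a ∧ f i ≤ f a := by
    intro i hi
    obtain rfl | hi := mem_insert.1 hi
    · exact ⟨le_rfl, le_rfl⟩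
    obtain hlt | ⟨heq, hle⟩ := Prod.Lex.toLex_le_toLex.1 (hamax i hi)
    · exact ⟨hlt.le, hfg (mem_insert_of_mem hi) (mem_insert_self a s) hlt⟩
    · exact ⟨heq.le, hle⟩
  set k := σ.symm a
  have hσk : σ k = a := σ.apply_symm_apply a
  have hk : k ∈ insert a s := by
    obtain hka | hka := eq_or_ne k a
    · exact hka ▸ mem_insert_self a s
    · exact hσ (show σ k ≠ k by rw [hσk]; exact hka.symm)
  have hσa : σ a ∈ insert a s := by
    obtain hσa | hσa := eq_or_ne (σ a) a
    · rw [hσa]; exact mem_insert_self a s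
    · exact hσ (set_support_apply_mem.2 hσa)
  set τ := σ * swap k a
  have hτa : τ a = a := by simp [τ, hσk]
  have hτ : {x | τ x ≠ x} ⊆ s := by
    intro i (hi : τ i ≠ i)
    have hia : i ≠ a := by rintro rfl; exact hi hτa
    refine mem_of_mem_insert_of_ne ?_ hia
    obtain rfl | hik := eq_or_ne i k
    · exact hk
    · exact hσ (by simpa [τ, swap_apply_of_ne_of_ne hik hia] using hi)
  have hexchange :
      ∑ i ∈ insert a s, φ (f i - g (τ i)) ≤ ∑ i ∈ insert a s, φ (f i - g (σ i)) := by
    obtain hka | hka := eq_or_ne k a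
    · simp [τ, hka]
    have hswap :=
      sum_comp_mul_swap_add (fun i j ↦ φ (f i - g j)) σ hk (mem_insert_self a s) hka
    have hpair := hφ.map_sub_add_map_sub_le (hmax k hk).2 (hmax _ hσa).1
    rw [hσk] at hswap
    rw [← add_le_add_iff_right (φ (f k - g a) + φ (f a - g (σ a))), hswap]
    gcongr
  calc ∑ i ∈ insert a s, φ (f i - g i)
      = φ (f a - g a) + ∑ i ∈ s, φ (f i - g i) := sum_insert has
    _ ≤ φ (f a - g a) + ∑ i ∈ s, φ (f i - g (τ i)) := by
        grw [ih (hfg.subset (subset_insert a s)) hτ]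
    _ = ∑ i ∈ insert a s, φ (f i - g (τ i)) := by rw [sum_insert has, hτa]
    _ ≤ _ := hexchange

theorem Monovary.sum_map_sub_le_sum_map_sub_comp_perm [Fintype ι] {φ : 𝕜 → β}
    (hφ : ConvexOn 𝕜 Set.univ φ) {f g : ι → 𝕜} (hfg : Monovary f g) (σ : Perm ι) :
    ∑ i, φ (f i - g i) ≤ ∑ i, φ (f i - g (σ i)) :=
  (hfg.monovaryOn _).sum_map_sub_le_sum_map_sub_comp_perm hφ fun _ _ ↦ mem_coe.2 (mem_univ _)

theorem identity_permutation_minimizes_convex_cost_general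
    (n : ℕ) (x y : Fin n → ℝ)
    (hx : Monotone x) (hy : Monotone y)
    (h : ℝ → ℝ) (hconv : ConvexOn ℝ Set.univ h) :
    ∀ σ : Equiv.Perm (Fin n),
      (∑ i, h (x i - y i) ≤ ∑ i, h (x i - y (σ i))) ∧
      (∑ i, |x i - y i| ≤ ∑ i, |x i - y (σ i)|) := fun σ ↦
  ⟨(hx.monovary hy).sum_map_sub_le_sum_map_sub_comp_perm hconv σ,
    (hx.monovary hy).sum_map_sub_le_sum_map_sub_comp_perm convexOn_univ_norm σ⟩

/-- for ordered reals `x₁ ≤ ⋯ ≤ xₙ`, `y₁ ≤ ⋯ ≤ yₙ` and `h : ℝ → ℝ`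
convex and continuous, the identity permutation minimizes
`∑ i, h (x i − y (σ i))` over all permutations `σ`; in particular it minimizes
`∑ i, |x i − y (σ i)|`. -/
theorem identity_permutation_minimizes_convex_cost
    (n : ℕ) (hn : 0 < n) (x y : Fin n → ℝ)
    (hx : Monotone x) (hy : Monotone y)
    (h : ℝ → ℝ) (hconv : ConvexOn ℝ Set.univ h) (hcont : Continuous h) :
    ∀ σ : Equiv.Perm (Fin n),
      (∑ i, h (x i - y i) ≤ ∑ i, h (x i - y (σ i))) ∧
      (∑ i, |x i - y i| ≤ ∑ i, |x i - y (σ i)|) :=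
  identity_permutation_minimizes_convex_cost_general n x y hx hy h hconv
end

section
/- Let μ and ν be Borel probability measures on ℝ with cumulative distribution functions F and G and quantile functions F⁻ and G⁻, and let λ be Lebesgue measure restricted to the interval (0,1). Let λ_K be the pushforward measure of λ under the map t ↦ (F⁻(t), G⁻(t)). Then for all real x and y, λ_K( (−∞,x] × (−∞,y] ) = min( F(x), G(y) ); that is, λ_K has joint cumulative distribution function H(x,y) = min(F(x), G(y)). -/
open MeasureTheory Set

/-- The cumulative distribution function of a measure on `ℝ`: `F(x) = μ((−∞,x])`. -/
noncomputable def cdfOf (μ : Measure ℝ) (x : ℝ) : ℝ := (μ (Set.Iic x)).toReal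

/-- The quantile function (generalized inverse of the cdf):
`F⁻(t) = inf {x : F(x) ≥ t}`. -/
noncomputable def quantileOf (μ : Measure ℝ) (t : ℝ) : ℝ :=
  sInf {x : ℝ | t ≤ cdfOf μ x}

/-! The quantile function is the lower adjoint of the cdf on `(0,1)`: `F⁻(t) ≤ x ↔ t ≤ F(x)`.
Hence `F⁻(t) ≤ x ∧ G⁻(t) ≤ y ↔ t ≤ min (F x) (G y)`, and the Lebesgue measure of this set of
`t ∈ (0,1)` is `min (F x) (G y)`. -/

open Filter Topology ProbabilityTheory

namespace StieltjesFunction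

variable {R : Type*} [ConditionallyCompleteLinearOrder R] [TopologicalSpace R]
  (f : StieltjesFunction R) {t : ℝ}

lemma le_apply_sInf_setOf_le [OrderTopology R] [DenselyOrdered R] [NoMaxOrder R]
    (hbdd : BddBelow {x | t ≤ f x}) (hne : {x | t ≤ f x}.Nonempty) :
    t ≤ f (sInf {x | t ≤ f x}) := by
  rw [← f.iInf_Ioi_eq]
  have : Nonempty (Ioi (sInf {x | t ≤ f x})) := nonempty_Ioi_subtype
  refine le_ciInf fun r => ?_
  obtain ⟨u, hu, hur⟩ := (csInf_lt_iff hbdd hne).1 r.2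
  exact hu.trans (f.mono hur.le)

lemma sInf_setOf_le_le_iff [OrderTopology R] [DenselyOrdered R] [NoMaxOrder R]
    (hbdd : BddBelow {x | t ≤ f x}) (hne : {x | t ≤ f x}.Nonempty) {x : R} :
    sInf {x | t ≤ f x} ≤ x ↔ t ≤ f x :=
  ⟨fun h => (f.le_apply_sInf_setOf_le hbdd hne).trans (f.mono h), fun h => csInf_le hbdd h⟩

lemma bddBelow_setOf_le {a : ℝ} (hf : Tendsto f atBot (𝓝 a)) (ht : a < t) :
    BddBelow {x | t ≤ f x} := by
  obtain ⟨y, hy⟩ := eventually_atBot.1 (hf.eventually_lt_const ht)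
  exact ⟨y, fun z hz => le_of_not_ge fun hzy => (hy z hzy).not_ge hz⟩

lemma nonempty_setOf_le {b : ℝ} (hf : Tendsto f atTop (𝓝 b)) (ht : t < b) :
    {x | t ≤ f x}.Nonempty :=
  let ⟨y, hy⟩ := (hf.eventually_const_lt ht).exists
  ⟨y, hy.le⟩

end StieltjesFunction

lemma cdfOf_nonneg (μ : Measure ℝ) (x : ℝ) : 0 ≤ cdfOf μ x := ENNReal.toReal_nonneg

section Quantile

variable (μ : Measure ℝ) [IsProbabilityMeasure μ]

lemma cdfOf_eq_cdf : cdfOf μ = cdf μ := by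
  ext x
  rw [cdfOf, cdf_eq_real, measureReal_def]

lemma quantileOf_le_iff {t x : ℝ} (ht : t ∈ Ioo 0 1) :
    quantileOf μ t ≤ x ↔ t ≤ cdfOf μ x := by
  rw [quantileOf, cdfOf_eq_cdf]
  exact (cdf μ).sInf_setOf_le_le_iff ((cdf μ).bddBelow_setOf_le (tendsto_cdf_atBot μ) ht.1)
    ((cdf μ).nonempty_setOf_le (tendsto_cdf_atTop μ) ht.2)

lemma monotoneOn_quantileOf : MonotoneOn (quantileOf μ) (Ioo 0 1) := by
  intro a ha b hb hab
  rw [quantileOf_le_iff μ ha]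
  exact hab.trans ((quantileOf_le_iff μ hb).1 le_rfl)

lemma aemeasurable_quantileOf : AEMeasurable (quantileOf μ) (volume.restrict (Ioo 0 1)) :=
  aemeasurable_restrict_of_monotoneOn measurableSet_Ioo (monotoneOn_quantileOf μ)

lemma preimage_quantileOf_prod_Iic_inter_Ioo (ν : Measure ℝ) [IsProbabilityMeasure ν] (x y : ℝ) :
    (fun t => (quantileOf μ t, quantileOf ν t)) ⁻¹' (Iic x ×ˢ Iic y) ∩ Ioo 0 1
      = Iic (min (cdfOf μ x) (cdfOf ν y)) ∩ Ioo 0 1 := by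
  ext t
  simp only [mem_inter_iff, mem_preimage, mem_prod, mem_Iic, le_min_iff]
  constructor
  · rintro ⟨⟨hx, hy⟩, ht⟩
    exact ⟨⟨(quantileOf_le_iff μ ht).1 hx, (quantileOf_le_iff ν ht).1 hy⟩, ht⟩
  · rintro ⟨⟨hx, hy⟩, ht⟩
    exact ⟨⟨(quantileOf_le_iff μ ht).2 hx, (quantileOf_le_iff ν ht).2 hy⟩, ht⟩

lemma cdfOf_le_one (x : ℝ) : cdfOf μ x ≤ 1 := by
  rw [cdfOf_eq_cdf]
  exact cdf_le_one μ x

end Quantile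

lemma Real.volume_Iic_inter_Ioo_zero_one {m : ℝ} (hm : m ≤ 1) :
    volume (Iic m ∩ Ioo 0 1) = ENNReal.ofReal m := by
  have hset : Iic m ∩ Ioo 0 1 = Ioc 0 m \ {1} := by
    ext t
    simp only [mem_inter_iff, mem_Iic, mem_Ioo, Set.mem_sdiff, mem_Ioc, mem_singleton_iff]
    constructor
    · rintro ⟨htm, ht0, ht1⟩
      exact ⟨⟨ht0, htm⟩, ht1.ne⟩
    · rintro ⟨⟨ht0, htm⟩, ht1⟩
      exact ⟨htm, ht0, lt_of_le_of_ne (htm.trans hm) ht1⟩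
  rw [hset, measure_sdiff_null (Real.volume_singleton), Real.volume_Ioc, sub_zero]

/-- the pushforward `λ_K` of Lebesgue measure on `(0,1)` under
`t ↦ (F⁻(t), G⁻(t))` has joint cumulative distribution function
`H(x,y) = min(F(x), G(y))`. -/
theorem quantile_coupling_cdf
    (μ ν : Measure ℝ) [IsProbabilityMeasure μ] [IsProbabilityMeasure ν] :
    ∀ x y : ℝ,
      (((volume.restrict (Set.Ioo (0 : ℝ) 1)).map
          (fun t => (quantileOf μ t, quantileOf ν t)))
        (Set.Iic x ×ˢ Set.Iic y)).toReal = min (cdfOf μ x) (cdfOf ν y) := by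
  intro x y
  have hmeas := (aemeasurable_quantileOf μ).prodMk (aemeasurable_quantileOf ν)
  rw [Measure.map_apply_of_aemeasurable hmeas (measurableSet_Iic.prod measurableSet_Iic),
    Measure.restrict_apply' measurableSet_Ioo, preimage_quantileOf_prod_Iic_inter_Ioo,
    Real.volume_Iic_inter_Ioo_zero_one (min_le_of_left_le (cdfOf_le_one μ x)),
    ENNReal.toReal_ofReal (le_min (cdfOf_nonneg μ x) (cdfOf_nonneg ν y))]
end
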